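/- (Weak completeness of Unwinding II) For each agent a ∈ A define δ_a(ρ,σ) = sup{ d_a(𝓔_α(ρ), 𝓔_α(σ)) : α a finite sequence over A×C } on reachable density operators. Then each δ_a is a pseudo-distance satisfying: (step consistency) δ_a(𝓔_{b,c}(ρ), 𝓔_{b,c}(σ)) ≤ δ_a(ρ,σ) for all b ∈ A, c ∈ C; (observation consistency) d_a(ρ,σ) ≤ δ_a(ρ,σ); and moreover K(𝕊,↝) ≥ (1/2)·sup{ δ_a(ρ, 𝓔_{b,c}(ρ)) : a ∈ A, ¬(b ↝ a), c ∈ C, ρ reachable }. -/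

import Mathlib

open scoped Classical ComplexOrder
open Matrix Kronecker

noncomputable section

/-- A density operator: positive semidefinite with trace 1. -/
def IsDensity {d : Type} [Fintype d] [DecidableEq d] (ρ : Matrix d d ℂ) : Prop :=
  ρ.PosSemidef ∧ ρ.trace = 1

/-- A super-operator: a linear, positive, trace-preserving map on matrices. -/
def IsSuperOp {d : Type} [Fintype d] [DecidableEq d]
    (F : Matrix d d ℂ → Matrix d d ℂ) : Prop :=
  IsLinearMap ℂ F ∧ (∀ ρ : Matrix d d ℂ, ρ.PosSemidef → (F ρ).PosSemidef) ∧
    (∀ ρ : Matrix d d ℂ, (F ρ).trace = ρ.trace)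

/-- A finite family of matrices (the data of a measurement). -/
structure PMeas (d : Type) where
  m : ℕ
  E : Fin m → Matrix d d ℂ

/-- The family is a POVM: positive semidefinite elements summing to the identity. -/
def PMeas.IsPOVM {d : Type} [Fintype d] [DecidableEq d] (P : PMeas d) : Prop :=
  (∀ i, (P.E i).PosSemidef) ∧ ∑ i, P.E i = 1

/-- The distance between outcome distributions of a measurement on two states. -/
def dE {d : Type} [Fintype d] (P : PMeas d) (ρ σ : Matrix d d ℂ) : ℝ :=
  (1 / 2) * ∑ i, ‖(P.E i * ρ).trace - (P.E i * σ).trace‖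

/-- The measurement pseudo-distance induced by a set of measurements. -/
def dM {d : Type} [Fintype d] (M : Set (PMeas d)) (ρ σ : Matrix d d ℂ) : ℝ :=
  sSup { x | ∃ P ∈ M, x = dE P ρ σ }

/-- A quantum system: initial state, agents, commands, super-operators, measurements. -/
structure QSystem (Agent Cmd d : Type) where
  ρ0 : Matrix d d ℂ
  A : Set Agent
  C : Set Cmd
  Ecmd : Agent → Cmd → Matrix d d ℂ → Matrix d d ℂ
  M : Agent → Set (PMeas d)

/-- Well-formedness: the initial state is a density operator, commands act as
super-operators, and agents measure with POVMs. -/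
def QSystem.WellFormed {Agent Cmd d : Type} [Fintype d] [DecidableEq d]
    (S : QSystem Agent Cmd d) : Prop :=
  IsDensity S.ρ0 ∧ (∀ a ∈ S.A, ∀ c ∈ S.C, IsSuperOp (S.Ecmd a c)) ∧
    (∀ a ∈ S.A, ∀ P ∈ S.M a, P.IsPOVM)

/-- Execution of a finite action sequence (composition of super-operators, in order). -/
def QSystem.run {Agent Cmd d : Type} (S : QSystem Agent Cmd d)
    (α : List (Agent × Cmd)) (ρ : Matrix d d ℂ) : Matrix d d ℂ :=
  α.foldl (fun τ p => S.Ecmd p.1 p.2 τ) ρ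

/-- A sequence over A × C. -/
def QSystem.Valid {Agent Cmd d : Type} (S : QSystem Agent Cmd d)
    (α : List (Agent × Cmd)) : Prop :=
  ∀ p ∈ α, p.1 ∈ S.A ∧ p.2 ∈ S.C

/-- `purge G D α` deletes from `α` every pair `(a, c)` with `a ∈ G` and `c ∈ D`. -/
def purge {Agent Cmd : Type} (G : Set Agent) (D : Set Cmd) :
    List (Agent × Cmd) → List (Agent × Cmd)
  | [] => []
  | p :: rest => if p.1 ∈ G ∧ p.2 ∈ D then purge G D rest else p :: purge G D rest

/-- A reachable density operator. -/
def QSystem.Reachable {Agent Cmd d : Type} (S : QSystem Agent Cmd d)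
    (ρ : Matrix d d ℂ) : Prop :=
  ∃ α, S.Valid α ∧ S.run α S.ρ0 = ρ

/-- `∇ a`: the set of agents from which information may not flow to `a`. -/
def nabla {Agent : Type} (pol : Agent → Agent → Prop) (a : Agent) : Set Agent :=
  { b | ¬ pol b a }

/-- The security degree `K(𝕊,↝)`. -/
def Kdeg {Agent Cmd d : Type} [Fintype d] (S : QSystem Agent Cmd d)
    (pol : Agent → Agent → Prop) : ℝ :=
  sSup { x | ∃ a ∈ S.A, ∃ α, S.Valid α ∧
    x = dM (S.M a) (S.run α S.ρ0) (S.run (purge (nabla pol a) Set.univ α) S.ρ0) }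

/-- The `t`-bounded security degree `K_t(𝕊,↝)`. -/
def Kt {Agent Cmd d : Type} [Fintype d] (S : QSystem Agent Cmd d)
    (pol : Agent → Agent → Prop) (t : ℕ) : ℝ :=
  sSup { x | ∃ a ∈ S.A, ∃ α, S.Valid α ∧ α.length ≤ t ∧
    x = dM (S.M a) (S.run α S.ρ0) (S.run (purge (nabla pol a) Set.univ α) S.ρ0) }

/-- The interference degree `Int(G₁, D | G₂)`. -/
def IntDeg {Agent Cmd d : Type} [Fintype d] (S : QSystem Agent Cmd d)
    (G1 : Set Agent) (D : Set Cmd) (G2 : Set Agent) : ℝ :=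
  sSup { x | ∃ a ∈ G2, ∃ α, S.Valid α ∧
    x = dM (S.M a) (S.run α S.ρ0) (S.run (purge G1 D α) S.ρ0) }

/-- Trace distance `d(ρ,σ) = (1/2)·tr √((ρ−σ)†(ρ−σ))`. -/
def traceDist {d : Type} [Fintype d] [DecidableEq d] (ρ σ : Matrix d d ℂ) : ℝ :=
  (1 / 2) * (((Matrix.posSemidef_conjTranspose_mul_self (ρ - σ)).1.eigenvectorUnitary.1 *
    diagonal (fun i => ((Real.sqrt
      ((Matrix.posSemidef_conjTranspose_mul_self (ρ - σ)).1.eigenvalues i) : ℝ) : ℂ)) *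
    (star (Matrix.posSemidef_conjTranspose_mul_self (ρ - σ)).1.eigenvectorUnitary :
      Matrix d d ℂ)).trace).re

end
noncomputable section

/-! Every `δ_a` is the supremum of the pseudo-distances `d_a(𝓔_α ·, 𝓔_α ·)`, which are uniformly
bounded by `1` on density operators, so it is again a pseudo-distance; prefixing `α` by `(b, c)`
gives step consistency and `α = ε` gives observation consistency. For the bound on `K`: when
`ρ = 𝓔_β(ρ₀)` and `¬(b ↝ a)`, the runs of `β α` and `β (b,c) α` have the same `∇a`-purge, so the
triangle inequality through the purged run bounds `d_a(𝓔_α ρ, 𝓔_α 𝓔_{b,c} ρ)` by `2K`. -/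

open scoped MatrixOrder in
theorem Matrix.PosSemidef.trace_mul_nonneg {n 𝕜 : Type*} [Fintype n] [RCLike 𝕜]
    {E ρ : Matrix n n 𝕜} (hE : E.PosSemidef) (hρ : ρ.PosSemidef) : 0 ≤ (E * ρ).trace := by
  obtain ⟨B, rfl⟩ := CStarAlgebra.nonneg_iff_eq_star_mul_self.mp hE.nonneg
  rw [star_eq_conjTranspose, Matrix.mul_assoc, trace_mul_comm]
  exact (hρ.mul_mul_conjTranspose_same B).trace_nonneg

structure IsPseudoDistOn {X : Type*} (T : Set X) (D : X → X → ℝ) : Prop where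
  nonneg : ∀ x ∈ T, ∀ y ∈ T, 0 ≤ D x y
  self : ∀ x ∈ T, D x x = 0
  symm : ∀ x ∈ T, ∀ y ∈ T, D x y = D y x
  triangle : ∀ x ∈ T, ∀ y ∈ T, ∀ z ∈ T, D x z ≤ D x y + D y z

theorem le_sSup_of_forall_le {ι : Type*} {p : ι → Prop} {g : ι → ℝ} {B : ℝ}
    (hB : ∀ i, p i → g i ≤ B) {i : ι} (hi : p i) : g i ≤ sSup {r | ∃ i, p i ∧ r = g i} :=
  le_csSup ⟨B, by rintro r ⟨j, hj, rfl⟩; exact hB j hj⟩ ⟨i, hi, rfl⟩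

namespace IsPseudoDistOn

variable {X : Type*} {T : Set X}

theorem comp {D : X → X → ℝ} (hD : IsPseudoDistOn T D) {g : X → X} (hg : ∀ x ∈ T, g x ∈ T) :
    IsPseudoDistOn T (fun x y => D (g x) (g y)) where
  nonneg x hx y hy := hD.nonneg _ (hg x hx) _ (hg y hy)
  self x hx := hD.self _ (hg x hx)
  symm x hx y hy := hD.symm _ (hg x hx) _ (hg y hy)
  triangle x hx y hy z hz := hD.triangle _ (hg x hx) _ (hg y hy) _ (hg z hz)

end IsPseudoDistOn

theorem isPseudoDistOn_sSup {X ι : Type*} {T : Set X} {p : ι → Prop} {f : ι → X → X → ℝ}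
    (hf : ∀ i, p i → IsPseudoDistOn T (f i)) {B : ℝ}
    (hB : ∀ i, p i → ∀ x ∈ T, ∀ y ∈ T, f i x y ≤ B) :
    IsPseudoDistOn T (fun x y => sSup {r | ∃ i, p i ∧ r = f i x y}) := by
  have nonneg : ∀ x ∈ T, ∀ y ∈ T, 0 ≤ sSup {r | ∃ i, p i ∧ r = f i x y} :=
    fun x hx y hy => Real.sSup_nonneg <| by
      rintro r ⟨i, hi, rfl⟩
      exact (hf i hi).nonneg x hx y hy
  refine ⟨nonneg, fun x hx => ?_, fun x hx y hy => ?_, fun x hx y hy z hz => ?_⟩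
  · refine le_antisymm (Real.sSup_le ?_ le_rfl) (nonneg x hx x hx)
    rintro r ⟨i, hi, rfl⟩
    exact ((hf i hi).self x hx).le
  · congr 1
    ext r
    exact exists_congr fun i => and_congr_right fun hi => by rw [(hf i hi).symm x hx y hy]
  · refine Real.sSup_le ?_ (add_nonneg (nonneg x hx y hy) (nonneg y hy z hz))
    rintro r ⟨i, hi, rfl⟩
    exact ((hf i hi).triangle x hx y hy z hz).trans <| add_le_add
      (le_sSup_of_forall_le (fun j hj => hB j hj x hx y hy) hi)
      (le_sSup_of_forall_le (fun j hj => hB j hj y hy z hz) hi)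

section Measurement

variable {d : Type} [Fintype d]

theorem isPseudoDistOn_dE (P : PMeas d) (T : Set (Matrix d d ℂ)) :
    IsPseudoDistOn T (dE P) where
  nonneg _ _ _ _ := by unfold dE; positivity
  self _ _ := by simp [dE]
  symm ρ _ σ _ := by simp only [dE, norm_sub_rev]
  triangle ρ _ σ _ τ _ := by
    unfold dE
    rw [← mul_add, ← Finset.sum_add_distrib]
    gcongr
    exact norm_sub_le_norm_sub_add_norm_sub _ _ _

theorem dM_nonneg (M : Set (PMeas d)) (ρ σ : Matrix d d ℂ) : 0 ≤ dM M ρ σ :=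
  Real.sSup_nonneg <| by
    rintro x ⟨P, -, rfl⟩
    exact (isPseudoDistOn_dE P Set.univ).nonneg _ trivial _ trivial

variable [DecidableEq d]

theorem PMeas.IsPOVM.sum_trace_mul {P : PMeas d} (hP : P.IsPOVM) (ρ : Matrix d d ℂ) :
    ∑ i, (P.E i * ρ).trace = ρ.trace := by
  rw [← trace_sum, ← Finset.sum_mul, hP.2, Matrix.one_mul]

theorem dE_le_one {P : PMeas d} (hP : P.IsPOVM) {ρ σ : Matrix d d ℂ}
    (hρ : IsDensity ρ) (hσ : IsDensity σ) : dE P ρ σ ≤ 1 := by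
  have hnorm : ∀ i τ, IsDensity τ → (‖(P.E i * τ).trace‖ : ℂ) = (P.E i * τ).trace :=
    fun i τ hτ => Complex.norm_of_nonneg' ((hP.1 i).trace_mul_nonneg hτ.1)
  have hsum : ∑ i, (‖(P.E i * ρ).trace‖ + ‖(P.E i * σ).trace‖) = 2 := by
    apply Complex.ofReal_injective
    push_cast
    rw [Finset.sum_add_distrib]
    simp only [hnorm _ _ hρ, hnorm _ _ hσ, hP.sum_trace_mul, hρ.2, hσ.2]
    norm_num
  calc dE P ρ σ ≤ 1 / 2 * ∑ i, (‖(P.E i * ρ).trace‖ + ‖(P.E i * σ).trace‖) := by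
        unfold dE
        gcongr
        exact norm_sub_le _ _
    _ = 1 := by rw [hsum]; norm_num

theorem dM_le_one {M : Set (PMeas d)} (hM : ∀ P ∈ M, P.IsPOVM) {ρ σ : Matrix d d ℂ}
    (hρ : IsDensity ρ) (hσ : IsDensity σ) : dM M ρ σ ≤ 1 :=
  Real.sSup_le (by rintro x ⟨P, hP, rfl⟩; exact dE_le_one (hM P hP) hρ hσ) zero_le_one

theorem isPseudoDistOn_dM {M : Set (PMeas d)} (hM : ∀ P ∈ M, P.IsPOVM) :
    IsPseudoDistOn {ρ | IsDensity ρ} (dM M) :=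
  isPseudoDistOn_sSup (fun P _ => isPseudoDistOn_dE P _)
    (fun P hP _ hρ _ hσ => dE_le_one (hM P hP) hρ hσ)

end Measurement

theorem purge_append {Agent Cmd : Type} (G : Set Agent) (D : Set Cmd)
    (α β : List (Agent × Cmd)) : purge G D (α ++ β) = purge G D α ++ purge G D β := by
  induction α with
  | nil => rfl
  | cons p α ih => by_cases h : p.1 ∈ G ∧ p.2 ∈ D <;> simp [purge, h, ih]

theorem purge_sublist {Agent Cmd : Type} (G : Set Agent) (D : Set Cmd)
    (α : List (Agent × Cmd)) : (purge G D α).Sublist α := by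
  induction α with
  | nil => exact .slnil
  | cons p α ih =>
    by_cases h : p.1 ∈ G ∧ p.2 ∈ D
    · simpa [purge, h] using ih.cons p
    · simpa [purge, h] using ih.cons_cons p

theorem purge_cons_of_mem {Agent Cmd : Type} {G : Set Agent} {D : Set Cmd} {a : Agent} {c : Cmd}
    (ha : a ∈ G) (hc : c ∈ D) (α : List (Agent × Cmd)) :
    purge G D ((a, c) :: α) = purge G D α := by
  simp [purge, ha, hc]

namespace QSystem

variable {Agent Cmd d : Type} (S : QSystem Agent Cmd d)

theorem valid_cons {p : Agent × Cmd} {α : List (Agent × Cmd)} :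
    S.Valid (p :: α) ↔ (p.1 ∈ S.A ∧ p.2 ∈ S.C) ∧ S.Valid α :=
  List.forall_mem_cons

theorem valid_append {α β : List (Agent × Cmd)} : S.Valid (α ++ β) ↔ S.Valid α ∧ S.Valid β :=
  List.forall_mem_append

variable {S} in
theorem Valid.purge {α : List (Agent × Cmd)} (hα : S.Valid α) (G : Set Agent) (D : Set Cmd) :
    S.Valid (purge G D α) :=
  fun p hp => hα p ((purge_sublist G D α).subset hp)

theorem run_cons (p : Agent × Cmd) (α : List (Agent × Cmd)) (ρ : Matrix d d ℂ) :
    S.run (p :: α) ρ = S.run α (S.Ecmd p.1 p.2 ρ) := rfl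

theorem run_append (α β : List (Agent × Cmd)) (ρ : Matrix d d ℂ) :
    S.run (α ++ β) ρ = S.run β (S.run α ρ) :=
  List.foldl_append

variable {S} [Fintype d] [DecidableEq d]

theorem WellFormed.isDensity_run (hS : S.WellFormed) {α : List (Agent × Cmd)} (hα : S.Valid α)
    {ρ : Matrix d d ℂ} (hρ : IsDensity ρ) : IsDensity (S.run α ρ) := by
  induction α generalizing ρ with
  | nil => exact hρ
  | cons p α ih =>
    obtain ⟨⟨ha, hc⟩, hα⟩ := S.valid_cons.mp hα
    obtain ⟨-, hpos, htr⟩ := hS.2.1 p.1 ha p.2 hc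
    exact ih hα ⟨hpos ρ hρ.1, (htr ρ).trans hρ.2⟩

theorem WellFormed.isDensity_of_reachable (hS : S.WellFormed) {ρ : Matrix d d ℂ}
    (hρ : S.Reachable ρ) : IsDensity ρ := by
  obtain ⟨α, hα, rfl⟩ := hρ
  exact hS.isDensity_run hα hS.1

variable (S)

def unwindingDist (a : Agent) (ρ σ : Matrix d d ℂ) : ℝ :=
  sSup {x | ∃ α : List (Agent × Cmd), S.Valid α ∧ x = dM (S.M a) (S.run α ρ) (S.run α σ)}

variable {S} {a : Agent}

omit [DecidableEq d] in
theorem unwindingDist_le_of_forall_le {ρ σ : Matrix d d ℂ} {r : ℝ} (hr : 0 ≤ r)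
    (h : ∀ α, S.Valid α → dM (S.M a) (S.run α ρ) (S.run α σ) ≤ r) : S.unwindingDist a ρ σ ≤ r :=
  Real.sSup_le (by rintro x ⟨α, hα, rfl⟩; exact h α hα) hr

theorem WellFormed.dM_run_le_unwindingDist (hS : S.WellFormed) (ha : a ∈ S.A)
    {α : List (Agent × Cmd)} (hα : S.Valid α) {ρ σ : Matrix d d ℂ} (hρ : IsDensity ρ)
    (hσ : IsDensity σ) : dM (S.M a) (S.run α ρ) (S.run α σ) ≤ S.unwindingDist a ρ σ :=
  le_sSup_of_forall_le (p := S.Valid)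
    (fun _ hβ => dM_le_one (hS.2.2 a ha) (hS.isDensity_run hβ hρ) (hS.isDensity_run hβ hσ)) hα

theorem WellFormed.isPseudoDistOn_unwindingDist (hS : S.WellFormed) (ha : a ∈ S.A) :
    IsPseudoDistOn {ρ | IsDensity ρ} (S.unwindingDist a) :=
  isPseudoDistOn_sSup (p := S.Valid) (f := fun α ρ σ => dM (S.M a) (S.run α ρ) (S.run α σ))
    (fun _ hα => (isPseudoDistOn_dM (hS.2.2 a ha)).comp fun _ hρ => hS.isDensity_run hα hρ)
    (fun _ hα _ hρ _ hσ =>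
      dM_le_one (hS.2.2 a ha) (hS.isDensity_run hα hρ) (hS.isDensity_run hα hσ))

theorem WellFormed.unwindingDist_step_le (hS : S.WellFormed) (ha : a ∈ S.A) {b : Agent}
    (hb : b ∈ S.A) {c : Cmd} (hc : c ∈ S.C) {ρ σ : Matrix d d ℂ} (hρ : IsDensity ρ)
    (hσ : IsDensity σ) :
    S.unwindingDist a (S.Ecmd b c ρ) (S.Ecmd b c σ) ≤ S.unwindingDist a ρ σ :=
  S.unwindingDist_le_of_forall_le ((hS.isPseudoDistOn_unwindingDist ha).nonneg ρ hρ σ hσ)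
    fun α hα => hS.dM_run_le_unwindingDist ha (α := (b, c) :: α)
      (S.valid_cons.mpr ⟨⟨hb, hc⟩, hα⟩) hρ hσ

theorem WellFormed.dM_le_unwindingDist (hS : S.WellFormed) (ha : a ∈ S.A)
    {ρ σ : Matrix d d ℂ} (hρ : IsDensity ρ) (hσ : IsDensity σ) :
    dM (S.M a) ρ σ ≤ S.unwindingDist a ρ σ :=
  hS.dM_run_le_unwindingDist ha (α := []) (by simp [Valid]) hρ hσ

variable {pol : Agent → Agent → Prop}

omit [DecidableEq d] in
theorem Kdeg_nonneg : 0 ≤ Kdeg S pol :=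
  Real.sSup_nonneg (by rintro x ⟨a, -, α, -, rfl⟩; exact dM_nonneg ..)

theorem WellFormed.dM_run_purge_le_Kdeg (hS : S.WellFormed) (ha : a ∈ S.A)
    {α : List (Agent × Cmd)} (hα : S.Valid α) :
    dM (S.M a) (S.run α S.ρ0) (S.run (purge (nabla pol a) Set.univ α) S.ρ0) ≤ Kdeg S pol :=
  le_csSup ⟨1, by
      rintro x ⟨a, ha, α, hα, rfl⟩
      exact dM_le_one (hS.2.2 a ha) (hS.isDensity_run hα hS.1)
        (hS.isDensity_run (hα.purge _ _) hS.1)⟩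
    ⟨a, ha, α, hα, rfl⟩

theorem WellFormed.unwindingDist_le_two_mul_Kdeg (hS : S.WellFormed) (ha : a ∈ S.A)
    {b : Agent} (hb : b ∈ S.A) (hba : ¬ pol b a) {c : Cmd} (hc : c ∈ S.C)
    {ρ : Matrix d d ℂ} (hρ : S.Reachable ρ) :
    S.unwindingDist a ρ (S.Ecmd b c ρ) ≤ 2 * Kdeg S pol := by
  obtain ⟨β, hβ, rfl⟩ := hρ
  refine S.unwindingDist_le_of_forall_le (by linarith [S.Kdeg_nonneg (pol := pol)]) fun α hα => ?_
  set purged := purge (nabla pol a) Set.univ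
  have hβα : S.Valid (β ++ α) := S.valid_append.mpr ⟨hβ, hα⟩
  have hβbcα : S.Valid (β ++ (b, c) :: α) :=
    S.valid_append.mpr ⟨hβ, S.valid_cons.mpr ⟨⟨hb, hc⟩, hα⟩⟩
  have hpurge : purged (β ++ (b, c) :: α) = purged (β ++ α) := by
    simp only [purged, purge_append,
      purge_cons_of_mem (show b ∈ nabla pol a from hba) (Set.mem_univ c)]
  have hd := isPseudoDistOn_dM (hS.2.2 a ha)
  have hden := fun {γ} (hγ : S.Valid γ) => hS.isDensity_run hγ hS.1
  calc dM (S.M a) (S.run α (S.run β S.ρ0)) (S.run α (S.Ecmd b c (S.run β S.ρ0)))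
      = dM (S.M a) (S.run (β ++ α) S.ρ0) (S.run (β ++ (b, c) :: α) S.ρ0) := by
        rw [S.run_append, S.run_append, S.run_cons]
    _ ≤ dM (S.M a) (S.run (β ++ α) S.ρ0) (S.run (purged (β ++ α)) S.ρ0) +
        dM (S.M a) (S.run (β ++ (b, c) :: α) S.ρ0) (S.run (purged (β ++ (b, c) :: α)) S.ρ0) := by
      rw [hpurge, hd.symm _ (hden hβbcα) _ (hden (hβα.purge _ _))]
      exact hd.triangle _ (hden hβα) _ (hden (hβα.purge _ _)) _ (hden hβbcα)
    _ ≤ Kdeg S pol + Kdeg S pol :=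
      add_le_add (hS.dM_run_purge_le_Kdeg ha hβα) (hS.dM_run_purge_le_Kdeg ha hβbcα)
    _ = 2 * Kdeg S pol := by ring

end QSystem

theorem weak_completeness_unwinding_II_general {Agent Cmd d : Type}
    [Fintype d] [DecidableEq d]
    (S : QSystem Agent Cmd d) (hS : S.WellFormed)
    (pol : Agent → Agent → Prop)
    (δ : Agent → Matrix d d ℂ → Matrix d d ℂ → ℝ)
    (hδ : ∀ a ρ σ, δ a ρ σ =
      sSup { x | ∃ α : List (Agent × Cmd), S.Valid α ∧
        x = dM (S.M a) (S.run α ρ) (S.run α σ) }) :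
    (∀ a ∈ S.A, ∀ ρ σ, S.Reachable ρ → S.Reachable σ → 0 ≤ δ a ρ σ) ∧
    (∀ a ∈ S.A, ∀ ρ, S.Reachable ρ → δ a ρ ρ = 0) ∧
    (∀ a ∈ S.A, ∀ ρ σ, S.Reachable ρ → S.Reachable σ → δ a ρ σ = δ a σ ρ) ∧
    (∀ a ∈ S.A, ∀ ρ σ τ, S.Reachable ρ → S.Reachable σ → S.Reachable τ →
      δ a ρ τ ≤ δ a ρ σ + δ a σ τ) ∧
    (∀ a ∈ S.A, ∀ b ∈ S.A, ∀ c ∈ S.C, ∀ ρ σ, S.Reachable ρ → S.Reachable σ →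
      δ a (S.Ecmd b c ρ) (S.Ecmd b c σ) ≤ δ a ρ σ) ∧
    (∀ a ∈ S.A, ∀ ρ σ, S.Reachable ρ → S.Reachable σ → dM (S.M a) ρ σ ≤ δ a ρ σ) ∧
    Kdeg S pol ≥ (1 / 2) * sSup { x | ∃ a ∈ S.A, ∃ b ∈ S.A, ¬ pol b a ∧
      ∃ c ∈ S.C, ∃ ρ, S.Reachable ρ ∧ x = δ a ρ (S.Ecmd b c ρ) } := by
  obtain rfl : δ = S.unwindingDist := by ext a ρ σ; exact hδ a ρ σ
  have hden {ρ} (hρ : S.Reachable ρ) : IsDensity ρ := hS.isDensity_of_reachable hρ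
  have hpd {a} (ha : a ∈ S.A) := hS.isPseudoDistOn_unwindingDist ha
  refine ⟨fun a ha ρ σ hρ hσ => (hpd ha).nonneg ρ (hden hρ) σ (hden hσ),
    fun a ha ρ hρ => (hpd ha).self ρ (hden hρ),
    fun a ha ρ σ hρ hσ => (hpd ha).symm ρ (hden hρ) σ (hden hσ),
    fun a ha ρ σ τ hρ hσ hτ => (hpd ha).triangle ρ (hden hρ) σ (hden hσ) τ (hden hτ),
    fun a ha b hb c hc ρ σ hρ hσ => hS.unwindingDist_step_le ha hb hc (hden hρ) (hden hσ),
    fun a ha ρ σ hρ hσ => hS.dM_le_unwindingDist ha (hden hρ) (hden hσ), ?_⟩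
  have hsup : sSup { x | ∃ a ∈ S.A, ∃ b ∈ S.A, ¬ pol b a ∧ ∃ c ∈ S.C, ∃ ρ, S.Reachable ρ ∧
      x = S.unwindingDist a ρ (S.Ecmd b c ρ) } ≤ 2 * Kdeg S pol := by
    refine Real.sSup_le ?_ (by linarith [S.Kdeg_nonneg (pol := pol)])
    rintro x ⟨a, ha, b, hb, hba, c, hc, ρ, hρ, rfl⟩
    exact hS.unwindingDist_le_two_mul_Kdeg ha hb hba hc hρ
  linarith

/-- **Weak completeness of Unwinding II.** The canonical family
`δ_a(ρ,σ) = sup_α d_a(𝓔_α(ρ), 𝓔_α(σ))` is a pseudo-distance on reachable density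
operators satisfying step consistency and observation consistency, and
`K(𝕊,↝) ≥ (1/2)·sup{ δ_a(ρ, 𝓔_{b,c}(ρ)) : a ∈ A, ¬(b ↝ a), c ∈ C, ρ reachable }`. -/
theorem weak_completeness_unwinding_II {Agent Cmd d : Type}
    [Fintype d] [DecidableEq d] [Nonempty d]
    (S : QSystem Agent Cmd d) (hS : S.WellFormed)
    (pol : Agent → Agent → Prop) (hpol : ∀ a ∈ S.A, pol a a)
    (δ : Agent → Matrix d d ℂ → Matrix d d ℂ → ℝ)
    (hδ : ∀ a ρ σ, δ a ρ σ =
      sSup { x | ∃ α : List (Agent × Cmd), S.Valid α ∧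
        x = dM (S.M a) (S.run α ρ) (S.run α σ) }) :
    (∀ a ∈ S.A, ∀ ρ σ, S.Reachable ρ → S.Reachable σ → 0 ≤ δ a ρ σ) ∧
    (∀ a ∈ S.A, ∀ ρ, S.Reachable ρ → δ a ρ ρ = 0) ∧
    (∀ a ∈ S.A, ∀ ρ σ, S.Reachable ρ → S.Reachable σ → δ a ρ σ = δ a σ ρ) ∧
    (∀ a ∈ S.A, ∀ ρ σ τ, S.Reachable ρ → S.Reachable σ → S.Reachable τ →
      δ a ρ τ ≤ δ a ρ σ + δ a σ τ) ∧
    (∀ a ∈ S.A, ∀ b ∈ S.A, ∀ c ∈ S.C, ∀ ρ σ, S.Reachable ρ → S.Reachable σ →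
      δ a (S.Ecmd b c ρ) (S.Ecmd b c σ) ≤ δ a ρ σ) ∧
    (∀ a ∈ S.A, ∀ ρ σ, S.Reachable ρ → S.Reachable σ → dM (S.M a) ρ σ ≤ δ a ρ σ) ∧
    Kdeg S pol ≥ (1 / 2) * sSup { x | ∃ a ∈ S.A, ∃ b ∈ S.A, ¬ pol b a ∧
      ∃ c ∈ S.C, ∃ ρ, S.Reachable ρ ∧ x = δ a ρ (S.Ecmd b c ρ) } :=
  weak_completeness_unwinding_II_general S hS pol δ hδ

end
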